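/- arXiv:1605.06682 — 2 statements merged into one kernel-verified Lean document; each statement's English description precedes it below -/
import Mathlib

section
/- Let X and X' be n×m complex matrices, let U be an n×r complex matrix, V an m×r complex matrix, and Σ an invertible r×r complex matrix. Define the full DMD operator Ā = X' V Σ⁻¹ U* and the reduced DMD operator Ã = U* X' V Σ⁻¹ (where * denotes conjugate transpose). If w ∈ ℂʳ satisfies Ã w = λ w with λ ≠ 0 and w ≠ 0, then the DMD mode φ = X' V Σ⁻¹ w satisfies Ā φ = λ φ and φ ≠ 0; that is, every nonzero eigenvalue of the reduced operator Ã is an eigenvalue of the full operator Ā, with eigenvector given by the exact DMD mode formula φ = X' V Σ⁻¹ w. -/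
open Matrix

/-- **DMD eigenvalue/eigenvector correspondence.**
If `Atil = Uᴴ X' V Σ⁻¹` satisfies `Atil w = λ w` with `λ ≠ 0`, `w ≠ 0`, then the DMD mode
`φ = X' V Σ⁻¹ w` is a nonzero eigenvector of the full operator `Abar = X' V Σ⁻¹ Uᴴ`
with the same eigenvalue `λ`. -/
theorem dmd_mode_eigenvector
    {n m r : ℕ} (X X' : Matrix (Fin n) (Fin m) ℂ)
    (U : Matrix (Fin n) (Fin r) ℂ) (V : Matrix (Fin m) (Fin r) ℂ)
    (S : Matrix (Fin r) (Fin r) ℂ) (hS : IsUnit S.det)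
    (Abar : Matrix (Fin n) (Fin n) ℂ) (hAbar : Abar = X' * V * S⁻¹ * Uᴴ)
    (Atil : Matrix (Fin r) (Fin r) ℂ) (hAtil : Atil = Uᴴ * (X' * V * S⁻¹))
    (lam : ℂ) (hlam : lam ≠ 0) (w : Fin r → ℂ) (hw : w ≠ 0)
    (heig : Atil.mulVec w = lam • w)
    (phi : Fin n → ℂ) (hphi : phi = (X' * V * S⁻¹).mulVec w) :
    Abar.mulVec phi = lam • phi ∧ phi ≠ 0 := by
  have hUphi : Uᴴ.mulVec phi = lam • w := by
    rw [hphi, Matrix.mulVec_mulVec, ← hAtil, heig]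
  constructor
  · rw [hAbar, ← Matrix.mulVec_mulVec, hUphi, Matrix.mulVec_smul, ← hphi]
  · intro h
    apply hw
    have : Uᴴ.mulVec phi = 0 := by rw [h, Matrix.mulVec_zero]
    rw [hUphi] at this
    exact (smul_eq_zero.mp this).resolve_left hlam
end

section
/- Let Θ be an m×p complex matrix (library evaluations), Υ a q×m complex matrix (input history), Ẋ an n×m complex matrix (derivative data), and suppose the inputs are given by state feedback expressible in the library, i.e. Υ = C Θᵀ for some q×p complex matrix C. Suppose an n×(p+q) block matrix Ξ = [Ξ_x Ξ_u] satisfies the SINDYc regression Ẋ = Ξ_x Θᵀ + Ξ_u Υ. Then for every n×q complex matrix D, the distinct block matrix Ξ' = [Ξ_x + D C, Ξ_u − D] also satisfies Ẋ = (Ξ_x + D C) Θᵀ + (Ξ_u − D) Υ; in particular, if q ≥ 1 and n ≥ 1, the regression has infinitely many solutions, so the effect of the feedback input cannot be disambiguated from internal feedback terms in the dynamics. -/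
open Matrix

/-- **Non-uniqueness of the SINDYc regression under state feedback.**
If the input history is given by feedback expressible in the library, `Υ = C Θᵀ`,
and `[Ξ_x Ξ_u]` solves `Ẋ = Ξ_x Θᵀ + Ξ_u Υ`, then for every `D` the modified pair
`[Ξ_x + D C, Ξ_u − D]` also solves the regression; in particular, for `n, q ≥ 1`
the set of solutions is infinite, so the effect of the feedback input cannot be
disambiguated from internal feedback terms. -/
theorem sindyc_feedback_nonunique
    {m p q n : ℕ} (Theta : Matrix (Fin m) (Fin p) ℂ)
    (Y : Matrix (Fin q) (Fin m) ℂ) (Xdot : Matrix (Fin n) (Fin m) ℂ)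
    (C : Matrix (Fin q) (Fin p) ℂ) (hfb : Y = C * Thetaᵀ)
    (Xix : Matrix (Fin n) (Fin p) ℂ) (Xiu : Matrix (Fin n) (Fin q) ℂ)
    (hsol : Xdot = Xix * Thetaᵀ + Xiu * Y) :
    (∀ D : Matrix (Fin n) (Fin q) ℂ,
      Xdot = (Xix + D * C) * Thetaᵀ + (Xiu - D) * Y) ∧
    (1 ≤ q → 1 ≤ n →
      {P : Matrix (Fin n) (Fin p) ℂ × Matrix (Fin n) (Fin q) ℂ |
        Xdot = P.1 * Thetaᵀ + P.2 * Y}.Infinite) := by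
  have key : ∀ D : Matrix (Fin n) (Fin q) ℂ,
      Xdot = (Xix + D * C) * Thetaᵀ + (Xiu - D) * Y := by
    intro D
    rw [hsol, hfb]
    simp only [Matrix.add_mul, Matrix.sub_mul, Matrix.mul_assoc]
    abel
  refine ⟨key, fun hq hn => ?_⟩
  haveI : Infinite (Matrix (Fin n) (Fin q) ℂ) := by
    refine Infinite.of_injective (fun c : ℂ => Matrix.of fun _ _ => c) ?_
    intro a b h
    exact congrFun (congrFun h ⟨0, hn⟩) ⟨0, hq⟩
  apply Set.infinite_of_injective_forall_mem
    (f := fun D : Matrix (Fin n) (Fin q) ℂ => (Xix + D * C, Xiu - D))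
  · intro D1 D2 h
    have := congrArg Prod.snd h
    simpa using this
  · intro D
    exact key D
end
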